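/- For a ReLU DNN with one hidden layer of width w1, input dimension w0, and scalar output, the computed function x ↦ T_2(σ(T_1 x)) is piecewise affine with at most C(w0, w1) = sum_{i=0}^{w0} binomial(w1, i) affine pieces. -/
import Mathlib



open Finset Module

section Aux

variable {E : Type*} [AddCommGroup E] [Module ℝ E]

/-- IVT on a segment for affine functionals, via an explicit parameter. -/
lemma aux_exists_zero {O : Set E} (hO : Convex ℝ O) (h : E →ᵃ[ℝ] ℝ) {x y : E}
    (hx : x ∈ O) (hy : y ∈ O) (hhx : 0 < h x) (hhy : h y ≤ 0) :
    ∃ z ∈ O, h z = 0 := by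
  set t : ℝ := h x / (h x - h y) with ht
  have hxy : 0 < h x - h y := by linarith
  have ht0 : 0 ≤ t := le_of_lt (div_pos hhx hxy)
  have ht1 : t ≤ 1 := by
    rw [div_le_one hxy]; linarith
  refine ⟨AffineMap.lineMap x y t, ?_, ?_⟩
  · rw [AffineMap.lineMap_apply_module]
    exact hO hx hy (by linarith) ht0 (by ring)
  · rw [AffineMap.apply_lineMap, AffineMap.lineMap_apply]
    show t • (h y - h x) + h x = 0
    rw [smul_eq_mul, ht]
    field_simp
    ring

lemma aux_cell_convex (V : Set E) (hV : Convex ℝ V) {n : ℕ}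
    (g : Fin n → (E →ᵃ[ℝ] ℝ)) (s : Fin n → Bool) :
    Convex ℝ {x ∈ V | ∀ j, (0 < g j x ↔ s j = true)} := by
  have heq : {x ∈ V | ∀ j, (0 < g j x ↔ s j = true)} =
      V ∩ ⋂ j, (g j) ⁻¹' (if s j = true then Set.Ioi 0 else Set.Iic 0) := by
    ext x
    simp only [Set.mem_setOf_eq, Set.mem_inter_iff, Set.mem_iInter, Set.mem_preimage]
    refine and_congr_right fun _ => forall_congr' fun j => ?_
    cases hs : s j
    · simp only [hs, Bool.false_eq_true, iff_false, if_false, Set.mem_Iic, not_lt]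
    · simp only [hs, iff_true, if_true, Set.mem_Ioi]
  rw [heq]
  refine hV.inter (convex_iInter fun j => ?_)
  by_cases hs : s j = true
  · rw [if_pos hs]; exact (convex_Ioi (0:ℝ)).affine_preimage (g j)
  · rw [if_neg hs]; exact (convex_Iic (0:ℝ)).affine_preimage (g j)

end Aux

section Key

variable {E : Type*} [AddCommGroup E] [Module ℝ E] [FiniteDimensional ℝ E]

lemma sum_choose_rec (d n : ℕ) : ∑ i ∈ range (d+1+1), (n+1).choose i
    = ∑ i ∈ range (d+1+1), n.choose i + ∑ i ∈ range (d+1), n.choose i := by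
  rw [Finset.sum_range_succ' _ (d+1), Finset.sum_range_succ' (fun i => n.choose i) (d+1)]
  simp [Nat.choose_succ_succ, Finset.sum_add_distrib]
  ring

lemma sum_choose_mono (d n : ℕ) :
    ∑ i ∈ range (d+1), n.choose i ≤ ∑ i ∈ range (d+1), (n+1).choose i :=
  Finset.sum_le_sum fun i _ => Nat.choose_le_choose i (Nat.le_succ n)

/-- Key counting lemma: the number of realized "sign vectors" of `n` affine
functionals on a convex set `V` whose vector span has rank `≤ d` is at most
`∑_{i ≤ d} C(n, i)`. -/
lemma key (n : ℕ) : ∀ (d : ℕ) (V : Set E), Convex ℝ V →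
    finrank ℝ (vectorSpan ℝ V) ≤ d →
    ∀ g : Fin n → (E →ᵃ[ℝ] ℝ),
    {s : Fin n → Bool | ∃ x ∈ V, ∀ j, (0 < g j x ↔ s j = true)}.ncard
      ≤ ∑ i ∈ range (d + 1), n.choose i := by
  induction n with
  | zero =>
    intro d V _ _ g
    have h1 : {s : Fin 0 → Bool | ∃ x ∈ V, ∀ j, (0 < g j x ↔ s j = true)}.ncard ≤ 1 := by
      rw [Set.ncard_le_one (Set.toFinite _)]
      intro a _ b _
      funext j; exact j.elim0
    refine h1.trans ?_
    calc (1 : ℕ) = ∑ i ∈ range 1, Nat.choose 0 i := by simp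
      _ ≤ ∑ i ∈ range (d + 1), Nat.choose 0 i :=
          Finset.sum_le_sum_of_subset
            (Finset.range_subset_range.2 (Nat.succ_le_succ (Nat.zero_le d)))
  | succ n IH =>
    intro d V hV hd g
    set g' : Fin n → (E →ᵃ[ℝ] ℝ) := fun j => g j.castSucc with hg'
    set h : E →ᵃ[ℝ] ℝ := g (Fin.last n) with hh
    set A : Set (Fin (n+1) → Bool) :=
      {s | ∃ x ∈ V, ∀ j, (0 < g j x ↔ s j = true)} with hA
    set A' : Set (Fin n → Bool) :=
      {s' | ∃ x ∈ V, ∀ j, (0 < g' j x ↔ s' j = true)} with hA'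
    set O : (Fin n → Bool) → Set E :=
      fun s' => {x ∈ V | ∀ j, (0 < g' j x ↔ s' j = true)} with hO
    set B : Set (Fin n → Bool) :=
      {s' | (∃ x ∈ O s', 0 < h x) ∧ (∃ y ∈ O s', h y ≤ 0)} with hB
    set π : (Fin (n+1) → Bool) → (Fin n → Bool) := fun s j => s j.castSucc with hπ
    set Ab : Bool → Set (Fin (n+1) → Bool) :=
      fun b => {s ∈ A | s (Fin.last n) = b} with hAb
    -- injectivity of restriction on each half
    have hinj : ∀ b, Set.InjOn π (Ab b) := by
      intro b s₁ hs₁ s₂ hs₂ hps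
      funext j
      refine Fin.lastCases ?_ (fun i => ?_) j
      · rw [hs₁.2, hs₂.2]
      · exact congrFun hps i
    -- restriction lands in A'
    have hπA' : ∀ b, π '' (Ab b) ⊆ A' := by
      rintro b s' ⟨s, ⟨⟨x, hxV, hxs⟩, _⟩, rfl⟩
      exact ⟨x, hxV, fun j => hxs j.castSucc⟩
    -- both halves realized implies a point on each side within the same cell
    have hcap : π '' (Ab true) ∩ π '' (Ab false) ⊆ B := by
      rintro s' ⟨⟨s₁, ⟨⟨x, hxV, hxs⟩, hl₁⟩, hp₁⟩, ⟨s₂, ⟨⟨y, hyV, hys⟩, hl₂⟩, hp₂⟩⟩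
      constructor
      · refine ⟨x, ⟨hxV, fun j => ?_⟩, ?_⟩
        · rw [← hp₁]; exact hxs j.castSucc
        · exact (hxs (Fin.last n)).2 hl₁
      · refine ⟨y, ⟨hyV, fun j => ?_⟩, ?_⟩
        · rw [← hp₂]; exact hys j.castSucc
        · have := (hys (Fin.last n)).1
          rw [hl₂] at this
          exact le_of_not_gt fun hc => Bool.false_ne_true (this hc)
    -- the count
    have hsplit : A = Ab true ∪ Ab false := by
      ext s
      constructor
      · intro hs
        cases hl : s (Fin.last n)
        · right; exact ⟨hs, hl⟩
        · left; exact ⟨hs, hl⟩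
      · rintro (⟨hs, _⟩ | ⟨hs, _⟩) <;> exact hs
    have hcard : A.ncard ≤ A'.ncard + B.ncard := by
      have h1 : A.ncard ≤ (Ab true).ncard + (Ab false).ncard := by
        rw [hsplit]; exact Set.ncard_union_le _ _
      have h2 : (π '' Ab true).ncard = (Ab true).ncard :=
        Set.ncard_image_of_injOn (hinj true)
      have h3 : (π '' Ab false).ncard = (Ab false).ncard :=
        Set.ncard_image_of_injOn (hinj false)
      have h4 : (π '' Ab true ∪ π '' Ab false).ncard + (π '' Ab true ∩ π '' Ab false).ncard
          = (π '' Ab true).ncard + (π '' Ab false).ncard :=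
        Set.ncard_union_add_ncard_inter _ _ (Set.toFinite _) (Set.toFinite _)
      have h5 : (π '' Ab true ∪ π '' Ab false).ncard ≤ A'.ncard :=
        Set.ncard_le_ncard (Set.union_subset (hπA' true) (hπA' false)) (Set.toFinite _)
      have h6 : (π '' Ab true ∩ π '' Ab false).ncard ≤ B.ncard :=
        Set.ncard_le_ncard hcap (Set.toFinite _)
      omega
    rcases d with _ | d'
    · -- rank 0: V is a subsingleton, at most one sign vector
      have hbot : vectorSpan ℝ V = ⊥ := by
        rw [← Submodule.finrank_eq_zero]; omega
      have h1 : A.ncard ≤ 1 := by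
        rw [Set.ncard_le_one (Set.toFinite _)]
        rintro a ⟨x, hxV, hxa⟩ b ⟨y, hyV, hyb⟩
        have hxy : x = y := by
          have hm : x -ᵥ y ∈ vectorSpan ℝ V := vsub_mem_vectorSpan ℝ hxV hyV
          rw [hbot, Submodule.mem_bot] at hm
          simpa [vsub_eq_sub, sub_eq_zero] using hm
        funext j
        rw [Bool.eq_iff_iff, ← hxa j, ← hyb j, hxy]
      refine h1.trans ?_
      calc (1 : ℕ) = ∑ i ∈ range 1, Nat.choose (n+1) i := by simp
        _ ≤ ∑ i ∈ range (0 + 1), Nat.choose (n+1) i :=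
            Finset.sum_le_sum_of_subset (Finset.range_subset_range.2 (by omega))
    · -- rank ≤ d'+1
      have hA'card : A'.ncard ≤ ∑ i ∈ range (d' + 1 + 1), n.choose i := IH (d'+1) V hV hd g'
      by_cases hBne : B.Nonempty
      · obtain ⟨s₀, ⟨x₀, hx₀O, hx₀⟩, ⟨y₀, hy₀O, hy₀⟩⟩ := hBne
        set W : Set E := V ∩ {x | h x = 0} with hW
        have hWconv : Convex ℝ W := hV.inter ((convex_singleton (0:ℝ)).affine_preimage h)
        -- B ⊆ realized sign vectors on W
        have hBsub : B ⊆ {s' | ∃ x ∈ W, ∀ j, (0 < g' j x ↔ s' j = true)} := by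
          rintro s' ⟨⟨x, hxO, hx⟩, ⟨y, hyO, hy⟩⟩
          obtain ⟨z, hzO, hz⟩ := aux_exists_zero (aux_cell_convex V hV g' s') h hxO hyO hx hy
          exact ⟨z, ⟨hzO.1, hz⟩, hzO.2⟩
        -- rank of vectorSpan of W is ≤ d'
        have hrank : finrank ℝ (vectorSpan ℝ W) ≤ d' := by
          have hle : vectorSpan ℝ W ≤ vectorSpan ℝ V :=
            vectorSpan_mono ℝ Set.inter_subset_left
          have hker : vectorSpan ℝ W ≤ LinearMap.ker h.linear := by
            rw [vectorSpan_def, Submodule.span_le]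
            rintro u hu
            obtain ⟨a, ha, b, hb, rfl⟩ := hu
            rw [SetLike.mem_coe, LinearMap.mem_ker]
            have hab : h.linear (a -ᵥ b) = h a -ᵥ h b := AffineMap.linearMap_vsub h a b
            rw [hab, ha.2, hb.2]
            simp
          have hv : x₀ -ᵥ y₀ ∈ vectorSpan ℝ V :=
            vsub_mem_vectorSpan ℝ hx₀O.1 hy₀O.1
          have hvne : x₀ -ᵥ y₀ ∉ vectorSpan ℝ W := by
            intro hc
            have hm := hker hc
            rw [LinearMap.mem_ker, AffineMap.linearMap_vsub] at hm
            have : h x₀ = h y₀ := by simpa [vsub_eq_sub, sub_eq_zero] using hm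
            linarith
          have hlt : vectorSpan ℝ W < vectorSpan ℝ V :=
            lt_of_le_of_ne hle (fun e => hvne (e ▸ hv))
          have := Submodule.finrank_lt_finrank_of_lt hlt
          omega
        have hBcard : B.ncard ≤ ∑ i ∈ range (d' + 1), n.choose i :=
          le_trans (Set.ncard_le_ncard hBsub (Set.toFinite _))
            (IH d' W hWconv hrank g')
        rw [sum_choose_rec]
        omega
      · have hB0 : B.ncard = 0 := by
          rw [Set.not_nonempty_iff_eq_empty] at hBne
          simp [hBne]
        have := sum_choose_mono (d'+1) n
        omega

end Key
/-- A one-hidden-layer ReLU network `x ↦ T₂(σ(T₁ x))` with input dimension `w0`, hidden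
width `w1` and scalar output is piecewise affine with at most
`C(w0, w1) = ∑_{i=0}^{w0} C(w1, i)` affine pieces: there is a cover of `ℝ^{w0}` by
`C(w0, w1)` sets on each of which the function agrees with an affine map. -/
theorem stmt_19 (w0 w1 : ℕ) (T1 : (Fin w0 → ℝ) →ᵃ[ℝ] (Fin w1 → ℝ))
    (T2 : (Fin w1 → ℝ) →ₗ[ℝ] ℝ) :
    ∃ U : Fin (∑ i ∈ Finset.range (w0 + 1), w1.choose i) → Set (Fin w0 → ℝ),
      (⋃ i, U i) = Set.univ ∧
      ∀ i, ∃ A : (Fin w0 → ℝ) →ᵃ[ℝ] ℝ,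
        Set.EqOn (fun x => T2 (fun j => max 0 (T1 x j))) (⇑A) (U i) := by
  classical
  set E := Fin w0 → ℝ
  set N := ∑ i ∈ Finset.range (w0 + 1), w1.choose i with hN
  set g : Fin w1 → (E →ᵃ[ℝ] ℝ) := fun j => (LinearMap.proj j : (Fin w1 → ℝ) →ₗ[ℝ] ℝ).toAffineMap.comp T1 with hg
  have hgapp : ∀ j x, g j x = T1 x j := fun j x => rfl
  -- the realized sign vectors
  set As : Set (Fin w1 → Bool) :=
    {s | ∃ x ∈ (Set.univ : Set E), ∀ j, (0 < g j x ↔ s j = true)} with hAs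
  have hcount : As.ncard ≤ N := by
    have hrank : Module.finrank ℝ (vectorSpan ℝ (Set.univ : Set E)) ≤ w0 := by
      have : vectorSpan ℝ (Set.univ : Set E) = ⊤ := by
        rw [← direction_affineSpan, AffineSubspace.span_univ, AffineSubspace.direction_top]
      rw [this, finrank_top]
      simp [E]
    exact key w1 w0 Set.univ convex_univ hrank g
  -- regions
  set R : (Fin w1 → Bool) → Set E := fun s => {x | ∀ j, (0 < T1 x j ↔ s j = true)} with hR
  set F : Finset (Fin w1 → Bool) := As.toFinset with hF
  have hFcard : F.card ≤ N := by
    show As.toFinset.card ≤ N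
    rwa [Set.ncard_eq_toFinset_card'] at hcount
  set U : Fin N → Set E := fun i =>
    if h : (i : ℕ) < F.card then R (F.equivFin.symm ⟨i, h⟩) else ∅ with hU
  refine ⟨U, ?_, ?_⟩
  · -- cover
    rw [Set.eq_univ_iff_forall]
    intro x
    set s : Fin w1 → Bool := fun j => decide (0 < T1 x j) with hs
    have hxs : ∀ j, (0 < T1 x j ↔ s j = true) := by
      intro j; rw [hs]; simp
    have hsA : s ∈ F := by
      rw [hF, Set.mem_toFinset]
      exact ⟨x, Set.mem_univ x, hxs⟩
    set i0 : Fin F.card := F.equivFin ⟨s, hsA⟩ with hi0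
    refine Set.mem_iUnion.2 ⟨⟨i0, lt_of_lt_of_le i0.2 hFcard⟩, ?_⟩
    rw [hU]
    dsimp only
    rw [dif_pos i0.2]
    have : (⟨(i0 : ℕ), i0.2⟩ : Fin F.card) = i0 := rfl
    rw [this, hi0, Equiv.symm_apply_apply]
    exact hxs
  · -- affine pieces
    intro i
    rw [hU]
    dsimp only
    by_cases hi : (i : ℕ) < F.card
    · rw [dif_pos hi]
      set s : Fin w1 → Bool := (↑(F.equivFin.symm ⟨i, hi⟩) : Fin w1 → Bool) with hs
      set P : (Fin w1 → ℝ) →ₗ[ℝ] (Fin w1 → ℝ) :=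
        LinearMap.pi (fun j => if s j = true then (LinearMap.proj j) else 0) with hP
      refine ⟨((T2.comp P).toAffineMap).comp T1, ?_⟩
      intro x hx
      show T2 (fun j => max 0 (T1 x j)) = T2 (P (T1 x))
      congr 1
      funext j
      have hPj : P (T1 x) j = if s j = true then T1 x j else 0 := by
        rw [hP, LinearMap.pi_apply]
        by_cases hsj : s j = true
        · rw [if_pos hsj, if_pos hsj]; rfl
        · rw [if_neg hsj, if_neg hsj]; rfl
      rw [hPj]
      by_cases hsj : s j = true
      · rw [if_pos hsj]
        exact max_eq_right (le_of_lt ((hx j).2 hsj))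
      · rw [if_neg hsj]
        have : ¬ 0 < T1 x j := fun hc => hsj ((hx j).1 hc)
        exact max_eq_left (le_of_not_gt this)
    · rw [dif_neg hi]
      exact ⟨(AffineMap.const ℝ E (0:ℝ)), fun x hx => absurd hx (Set.notMem_empty x)⟩
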